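/- The function f₀(X) = 1/√(det(1 + XᵗX)) on M₂(ℝ) satisfies the ultrahyperbolic equation ∂²f₀/∂x11∂x22 − ∂²f₀/∂x12∂x21 = 0. -/

import Mathlib

open Matrix

/-- ℝ⁴ identified with M₂(ℝ) via coordinates x (i,j) = x_{ij}. -/
abbrev E : Type := Fin 2 × Fin 2 → ℝ

/-- Partial derivative with respect to the coordinate x_p. -/
noncomputable def pder (p : Fin 2 × Fin 2) (f : E → ℝ) (x : E) : ℝ :=
  deriv (fun t : ℝ => f (x + t • (Pi.single p (1 : ℝ) : E))) 0

/-- The coordinate matrix X. -/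
def Xof (x : E) : Matrix (Fin 2) (Fin 2) ℝ := Matrix.of fun i j => x (i, j)

/-- f₀(X) = 1/√(det(1+XᵗX)). -/
noncomputable def f₀ (x : E) : ℝ :=
  (Real.sqrt ((1 + (Xof x)ᵀ * Xof x).det))⁻¹

/-!
Write D = det(1 + XᵀX); for 2 × 2 matrices D = 1 + |X|² + (det X)², and f₀ = D ^ r with r = -1/2.
The second-order chain rule gives
  □(D ^ r) = r (r - 1) D ^ (r - 2) (∂₁₁D ∂₂₂D - ∂₁₂D ∂₂₁D) + r D ^ (r - 1) □D,
and a direct computation yields ∂₁₁D ∂₂₂D - ∂₁₂D ∂₂₁D = 4 det X · D and □D = 6 det X.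
Hence □(D ^ r) = r (4 r + 2) det X · D ^ (r - 1), which vanishes exactly for r = -1/2.
-/

section LineDeriv

variable {V : Type*} [AddCommGroup V] [Module ℝ V] {f g : V → ℝ} {f' g' : ℝ} {x v : V}

theorem HasLineDerivAt.add (hf : HasLineDerivAt ℝ f f' x v) (hg : HasLineDerivAt ℝ g g' x v) :
    HasLineDerivAt ℝ (fun y => f y + g y) (f' + g') x v :=
  HasDerivAt.add hf hg

theorem HasLineDerivAt.sub (hf : HasLineDerivAt ℝ f f' x v) (hg : HasLineDerivAt ℝ g g' x v) :
    HasLineDerivAt ℝ (fun y => f y - g y) (f' - g') x v :=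
  HasDerivAt.sub hf hg

theorem HasLineDerivAt.const_add (c : ℝ) (hf : HasLineDerivAt ℝ f f' x v) :
    HasLineDerivAt ℝ (fun y => c + f y) f' x v :=
  HasDerivAt.const_add c hf

theorem HasLineDerivAt.const_mul (c : ℝ) (hf : HasLineDerivAt ℝ f f' x v) :
    HasLineDerivAt ℝ (fun y => c * f y) (c * f') x v :=
  HasDerivAt.const_mul c hf

theorem HasLineDerivAt.mul_const (c : ℝ) (hf : HasLineDerivAt ℝ f f' x v) :
    HasLineDerivAt ℝ (fun y => f y * c) (f' * c) x v :=
  HasDerivAt.mul_const hf c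

theorem HasLineDerivAt.sum {ι : Type*} (s : Finset ι) {F : ι → V → ℝ} {F' : ι → ℝ}
    (h : ∀ i ∈ s, HasLineDerivAt ℝ (F i) (F' i) x v) :
    HasLineDerivAt ℝ (fun y => ∑ i ∈ s, F i y) (∑ i ∈ s, F' i) x v :=
  HasDerivAt.fun_sum h

theorem HasLineDerivAt.mul (hf : HasLineDerivAt ℝ f f' x v) (hg : HasLineDerivAt ℝ g g' x v) :
    HasLineDerivAt ℝ (fun y => f y * g y) (f' * g x + f x * g') x v := by
  simpa [HasLineDerivAt] using HasDerivAt.fun_mul hf hg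

theorem HasDerivAt.comp_hasLineDerivAt {φ : ℝ → ℝ} {φ' : ℝ} (hφ : HasDerivAt φ φ' (f x))
    (hf : HasLineDerivAt ℝ f f' x v) : HasLineDerivAt ℝ (fun y => φ (f y)) (φ' * f') x v :=
  hφ.comp_of_eq 0 hf (by simp)

theorem hasLineDerivAt_apply {ι : Type*} (i : ι) (x v : ι → ℝ) :
    HasLineDerivAt ℝ (fun y => y i) (v i) x v := by
  simpa [HasLineDerivAt] using ((hasDerivAt_id (0 : ℝ)).mul_const (v i)).const_add (x i)

theorem lineDeriv_lineDeriv_comp {φ φ' φ'' : ℝ → ℝ} {D Dv : V → ℝ} {Du Duv : ℝ} {u : V}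
    (hφ : ∀ y, HasDerivAt φ (φ' (D y)) (D y)) (hφ' : HasDerivAt φ' (φ'' (D x)) (D x))
    (hDv : ∀ y, HasLineDerivAt ℝ D (Dv y) y v) (hDu : HasLineDerivAt ℝ D Du x u)
    (hDuv : HasLineDerivAt ℝ Dv Duv x u) :
    lineDeriv ℝ (fun y => lineDeriv ℝ (fun z => φ (D z)) y v) x u =
      φ'' (D x) * Du * Dv x + φ' (D x) * Duv := by
  have hfirst : (fun y => lineDeriv ℝ (fun z => φ (D z)) y v) = fun y => φ' (D y) * Dv y :=
    funext fun y => ((hφ y).comp_hasLineDerivAt (hDv y)).lineDeriv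
  rw [hfirst, ((hφ'.comp_hasLineDerivAt hDu).mul hDuv).lineDeriv]

end LineDeriv

theorem Matrix.det_one_add_transpose_mul_self_fin_two {R : Type*} [CommRing R]
    (A : Matrix (Fin 2) (Fin 2) R) :
    (1 + Aᵀ * A).det = 1 + ∑ i, ∑ j, A i j ^ 2 + A.det ^ 2 := by
  simp [det_fin_two, Fin.sum_univ_two, mul_apply]
  ring

theorem pder_eq_lineDeriv (p : Fin 2 × Fin 2) (f : E → ℝ) :
    pder p f = fun x => lineDeriv ℝ f x (Pi.single p 1) :=
  rfl

def det2 (y : E) : ℝ := y (0, 0) * y (1, 1) - y (0, 1) * y (1, 0)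

/-- The polarization of `det2`: `det2 (y + v) = det2 y + polarDet y v + det2 v`. -/
def polarDet (y v : E) : ℝ :=
  y (0, 0) * v (1, 1) + v (0, 0) * y (1, 1) - y (0, 1) * v (1, 0) - v (0, 1) * y (1, 0)

def gramDet (y : E) : ℝ := 1 + ∑ q, y q ^ 2 + det2 y ^ 2

def dGramDet (v y : E) : ℝ := 2 * ∑ q, v q * y q + 2 * det2 y * polarDet y v

def d2GramDet (u v y : E) : ℝ :=
  2 * ∑ q, v q * u q + 2 * (polarDet y u * polarDet y v + det2 y * polarDet u v)

theorem gramDet_pos (y : E) : 0 < gramDet y := by unfold gramDet; positivity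

theorem f₀_eq_rpow : f₀ = fun y => gramDet y ^ (-(1 / 2) : ℝ) := by
  funext y
  rw [f₀, det_one_add_transpose_mul_self_fin_two, Real.sqrt_eq_rpow, ← Real.rpow_neg_one,
    ← Real.rpow_mul]
  · simp [gramDet, det2, Xof, det_fin_two, Fintype.sum_prod_type]
  · positivity

theorem hasLineDerivAt_det2 (y v : E) : HasLineDerivAt ℝ det2 (polarDet y v) y v := by
  unfold det2
  convert (((hasLineDerivAt_apply (0, 0) y v).mul (hasLineDerivAt_apply (1, 1) y v)).sub
    ((hasLineDerivAt_apply (0, 1) y v).mul (hasLineDerivAt_apply (1, 0) y v))) using 1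
  unfold polarDet; ring

theorem hasLineDerivAt_polarDet (y u v : E) :
    HasLineDerivAt ℝ (fun z => polarDet z v) (polarDet u v) y u := by
  unfold polarDet
  have h := hasLineDerivAt_apply (x := y) (v := u)
  exact ((((h (0, 0)).mul_const _).add ((h (1, 1)).const_mul _)).sub ((h (0, 1)).mul_const _)).sub
    ((h (1, 0)).const_mul _)

theorem hasLineDerivAt_gramDet (y v : E) : HasLineDerivAt ℝ gramDet (dGramDet v y) y v := by
  have hsq (q : Fin 2 × Fin 2) := (hasLineDerivAt_apply q y v).mul (hasLineDerivAt_apply q y v)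
  have hdet := (hasLineDerivAt_det2 y v).mul (hasLineDerivAt_det2 y v)
  unfold gramDet
  convert ((HasLineDerivAt.sum Finset.univ fun q _ => hsq q).const_add 1).add hdet using 1
  · simp only [sq]
  · simp only [dGramDet, Finset.mul_sum]
    ring_nf

theorem hasLineDerivAt_dGramDet (y u v : E) :
    HasLineDerivAt ℝ (dGramDet v) (d2GramDet u v y) y u := by
  have hinner := HasLineDerivAt.sum Finset.univ fun q _ =>
    (hasLineDerivAt_apply q y u).const_mul (v q)
  have hprod := (hasLineDerivAt_det2 y u).mul (hasLineDerivAt_polarDet y u v)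
  unfold dGramDet
  convert (hinner.const_mul 2).add (hprod.const_mul 2) using 1
  · simp only [mul_assoc]
  · simp only [d2GramDet, Finset.mul_sum]

theorem dGramDet_mul_sub_dGramDet_mul (x : E) :
    dGramDet (Pi.single (0, 0) 1) x * dGramDet (Pi.single (1, 1) 1) x -
      dGramDet (Pi.single (0, 1) 1) x * dGramDet (Pi.single (1, 0) 1) x =
      4 * det2 x * gramDet x := by
  simp [dGramDet, gramDet, polarDet, det2, Pi.single_apply, Fintype.sum_prod_type]
  ring

theorem d2GramDet_sub_d2GramDet (x : E) :
    d2GramDet (Pi.single (0, 0) 1) (Pi.single (1, 1) 1) x -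
      d2GramDet (Pi.single (0, 1) 1) (Pi.single (1, 0) 1) x = 6 * det2 x := by
  simp [d2GramDet, polarDet, det2, Pi.single_apply]
  ring

theorem f₀_ultrahyperbolic :
    ∀ x : E,
      pder ((0 : Fin 2), (0 : Fin 2)) (pder ((1 : Fin 2), (1 : Fin 2)) f₀) x -
        pder ((0 : Fin 2), (1 : Fin 2)) (pder ((1 : Fin 2), (0 : Fin 2)) f₀) x = 0 := by
  intro x
  simp only [pder_eq_lineDeriv, f₀_eq_rpow]
  generalize hr : -(1 / 2 : ℝ) = r
  have hD (y : E) : gramDet y ≠ 0 := (gramDet_pos y).ne'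
  have hφ (y : E) : HasDerivAt (· ^ r) (r * gramDet y ^ (r - 1)) (gramDet y) :=
    Real.hasDerivAt_rpow_const (Or.inl (hD y))
  have hφ' : HasDerivAt (fun s => r * s ^ (r - 1)) (r * ((r - 1) * gramDet x ^ (r - 1 - 1)))
      (gramDet x) :=
    (Real.hasDerivAt_rpow_const (Or.inl (hD x))).const_mul r
  have hsecond (u v : E) := lineDeriv_lineDeriv_comp (φ' := fun s => r * s ^ (r - 1))
    (φ'' := fun s => r * ((r - 1) * s ^ (r - 1 - 1))) hφ hφ' (hasLineDerivAt_gramDet · v)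
    (hasLineDerivAt_gramDet x u) (hasLineDerivAt_dGramDet x u v)
  have hpow : gramDet x ^ (r - 1 - 1) * gramDet x = gramDet x ^ (r - 1) := by
    rw [Real.rpow_sub_one (hD x) (r - 1), div_mul_cancel₀ _ (hD x)]
  rw [hsecond, hsecond]
  linear_combination r * (r - 1) * gramDet x ^ (r - 1 - 1) * dGramDet_mul_sub_dGramDet_mul x
    + r * gramDet x ^ (r - 1) * d2GramDet_sub_d2GramDet x + 4 * r * (r - 1) * det2 x * hpow
    - 4 * r * det2 x * gramDet x ^ (r - 1) * hr
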